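/- For the (L,R)-random walk, for every x ∈ (0,1) and all i, j ∈ {0,…,M−1}: Σ_{k=0}^{M−1} (δ_{ik} − π_{k−i}·x) · H^±_{kj}(x) = δ_{ij}·ϖ_i, where δ is the Kronecker delta. Equivalently, H^±_{ij}(x) = δ_{ij}·ϖ_i + x·Σ_{k=0}^{M−1} π_{k−i} H^±_{kj}(x). -/

import Mathlib

open MeasureTheory ProbabilityTheory
open scoped Classical

noncomputable section

namespace LRWalk

variable {Ω : Type*} [MeasurableSpace Ω]

/-- Position of the `(L,R)`-random walk started at `i` after `m` steps,
`X_m = i + U_1 + ⋯ + U_m`. -/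
def pos (U : ℕ → Ω → ℤ) (i : ℤ) (m : ℕ) (ω : Ω) : ℤ :=
  i + ∑ ℓ ∈ Finset.Icc 1 m, U ℓ ω

/-- `j ∈ E° = {0,…,M−1}`. -/
def inEo (M : ℕ) (j : ℤ) : Prop := 0 ≤ j ∧ j ≤ (M : ℤ) - 1

/-- `τ° = m`, where `τ° = inf{m ≥ 1 : X_m ∈ {0,…,M−1}}` for the walk started at `i`. -/
def tauOEq (U : ℕ → Ω → ℤ) (M : ℕ) (i : ℤ) (m : ℕ) (ω : Ω) : Prop :=
  1 ≤ m ∧ (∀ k, 1 ≤ k → k < m → ¬ inEo M (pos U i k ω)) ∧ inEo M (pos U i m ω)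

/-- `H°_{ij}(x) = Σ_{m ≥ 1} P_i(τ° = m, X_m = j)·x^m`. -/
def Hcirc (μ : Measure Ω) (U : ℕ → Ω → ℤ) (M : ℕ) (i j : ℤ) (x : ℝ) : ℝ :=
  ∑' m : ℕ, (μ {ω | tauOEq U M i m ω ∧ pos U i m ω = j}).toReal * x ^ m

/-- `G_{ij}(x) = Σ_{m ≥ 0} P_i(X_m = j)·x^m`. -/
def Gpoint (μ : Measure Ω) (U : ℕ → Ω → ℤ) (i j : ℤ) (x : ℝ) : ℝ :=
  ∑' m : ℕ, (μ {ω | pos U i m ω = j}).toReal * x ^ m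


/-- `τ^± = m`, where `τ^± = inf{m ≥ 1 : X_m ∉ {0,…,M−1}}` (first exit time from
`E° = {0,…,M−1}`) for the walk started at `i`. -/
def tauPmEq (U : ℕ → Ω → ℤ) (M : ℕ) (i : ℤ) (m : ℕ) (ω : Ω) : Prop :=
  1 ≤ m ∧ (∀ k, 1 ≤ k → k < m → inEo M (pos U i k ω)) ∧ ¬ inEo M (pos U i m ω)

/-- `H^±_{ij}(x) = Σ_{m ≥ 1} P_i(τ^± = m, X_{m−1} = j)·x^{m−1}`. -/
def Hpm (μ : Measure Ω) (U : ℕ → Ω → ℤ) (M : ℕ) (i j : ℤ) (x : ℝ) : ℝ :=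
  ∑' m : ℕ, (μ {ω | tauPmEq U M i m ω ∧ pos U i (m - 1) ω = j}).toReal * x ^ (m - 1)

/-- `ϖ_i = P_i(X_1 ∉ {0,…,M−1})`. -/
def varpi (μ : Measure Ω) (U : ℕ → Ω → ℤ) (M : ℕ) (i : ℤ) : ℝ :=
  (μ {ω | ¬ inEo M (pos U i 1 ω)}).toReal
end LRWalk

/-!
First-step analysis. Put `p_n(i) = P_i(τ^± = n + 1, X_n = j)`, so that
`H^±_{ij}(x) = Σ_n p_n(i) x^n`. The first `n + 1` steps have the product law `π^{⊗(n+1)}`, and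
splitting off the first step gives `p_{n+1}(i) = Σ_{k ∈ E°} π_{k-i} p_n(k)`, while
`p_0(i) = δ_{ij} ϖ_i`. Multiplying by `x^{n+1}` and summing gives the second identity; the first
is a rearrangement of it.
-/

open scoped ENNReal

namespace LRWalk

theorem measure_steps_mem_eq_tsum {Ω β : Type*} [MeasurableSpace Ω] [MeasurableSpace β]
    [DiscreteMeasurableSpace β] [Countable β] {μ : Measure Ω} {U : ℕ → Ω → β}
    (hmeas : ∀ ℓ, Measurable (U ℓ)) (hindep : iIndepFun U μ) (m : ℕ) (C : Set (Fin m → β)) :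
    μ {ω | (fun ℓ : Fin m => U (ℓ + 1) ω) ∈ C}
      = ∑' u, C.indicator (fun u => ∏ ℓ : Fin m, μ {ω | U (ℓ + 1) ω = u ℓ}) u := by
  have := hindep.isProbabilityMeasure
  have hlaw := (hindep.precomp (g := fun ℓ : Fin m => (ℓ : ℕ) + 1)
    fun a b h => Fin.ext (by simpa using h)).map_fun_eq_pi_map fun ℓ => (hmeas _).aemeasurable
  have hV : Measurable fun ω (ℓ : Fin m) => U (ℓ + 1) ω := measurable_pi_lambda _ fun _ => hmeas _
  rw [← Set.preimage_ofPred_eq, Set.ofPred_mem_eq, ← Measure.map_apply hV (.of_discrete), hlaw,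
    ← Measure.tsum_indicator_apply_singleton _ _ (.of_discrete)]
  refine tsum_congr fun u => congrFun (Set.indicator_congr fun u _ => ?_) u
  rw [← Set.univ_pi_singleton, Measure.pi_pi]
  exact Finset.prod_congr rfl fun ℓ _ => Measure.map_apply (hmeas _) (.of_discrete)

/-- `tupleWalk i u k = i + u 0 + ⋯ + u (k - 1)`, steps beyond the tuple counting as `0`. -/
def tupleWalk {m : ℕ} (i : ℤ) (u : Fin m → ℤ) (k : ℕ) : ℤ :=
  i + ∑ ℓ : Fin m, if (ℓ : ℕ) < k then u ℓ else 0

@[simp]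
theorem tupleWalk_zero {m : ℕ} (i : ℤ) (u : Fin m → ℤ) : tupleWalk i u 0 = i := by
  simp [tupleWalk]

theorem tupleWalk_cons {m : ℕ} (i a : ℤ) (v : Fin m → ℤ) (k : ℕ) :
    tupleWalk i (Fin.cons a v : Fin (m + 1) → ℤ) (k + 1) = tupleWalk (i + a) v k := by
  simp only [tupleWalk, Fin.sum_univ_succ, Fin.cons_zero, Fin.cons_succ, Fin.val_zero,
    Fin.val_succ, Nat.zero_lt_succ, if_true, Nat.add_lt_add_iff_right]
  ring

theorem pos_eq_tupleWalk {Ω : Type*} (U : ℕ → Ω → ℤ) (i : ℤ) (ω : Ω) {m k : ℕ} (hk : k ≤ m) :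
    pos U i k ω = tupleWalk i (fun ℓ : Fin m => U (ℓ + 1) ω) k := by
  have hfilter : (Finset.range m).filter (· < k) = Finset.range k := by
    ext ℓ
    simp only [Finset.mem_filter, Finset.mem_range]
    omega
  rw [pos, tupleWalk, Fin.sum_univ_eq_sum_range (fun ℓ => if ℓ < k then U (ℓ + 1) ω else 0),
    ← Finset.sum_filter, hfilter, Finset.range_eq_Ico, Finset.sum_Ico_add' (fun ℓ => U ℓ ω),
    zero_add, Finset.Ico_add_one_right_eq_Icc]

/-- The event `τ^± = n + 1, X_n = j` for the walk with positions `p`. -/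
def ExitsAfter (M : ℕ) (j : ℤ) (n : ℕ) (p : ℕ → ℤ) : Prop :=
  (∀ k, 1 ≤ k → k ≤ n → inEo M (p k)) ∧ ¬ inEo M (p (n + 1)) ∧ p n = j

theorem exitsAfter_congr {M : ℕ} {j : ℤ} {n : ℕ} {p q : ℕ → ℤ} (h : ∀ k ≤ n + 1, p k = q k) :
    ExitsAfter M j n p ↔ ExitsAfter M j n q := by
  unfold ExitsAfter
  rw [h (n + 1) le_rfl, h n n.le_succ]
  exact and_congr_left' <| forall_congr' fun k => imp_congr_right fun _ =>
    imp_congr_right fun hk => by rw [h k (by omega)]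

theorem exitsAfter_zero {M : ℕ} {j : ℤ} {p : ℕ → ℤ} :
    ExitsAfter M j 0 p ↔ ¬ inEo M (p 1) ∧ p 0 = j := by
  simp only [ExitsAfter]
  exact and_iff_right fun k hk hk0 => absurd hk (by omega)

theorem exitsAfter_succ {M : ℕ} {j : ℤ} {n : ℕ} {p : ℕ → ℤ} :
    ExitsAfter M j (n + 1) p ↔ inEo M (p 1) ∧ ExitsAfter M j n (fun k => p (k + 1)) := by
  simp only [ExitsAfter]
  constructor
  · rintro ⟨hin, hout, hj⟩
    exact ⟨hin 1 le_rfl (by omega), fun k _ hk => hin (k + 1) (by omega) (by omega), hout, hj⟩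
  · rintro ⟨h1, hin, hout, hj⟩
    refine ⟨fun k hk1 hkn => ?_, hout, hj⟩
    obtain ⟨k, rfl⟩ : ∃ k', k = k' + 1 := ⟨k - 1, by omega⟩
    rcases k.eq_zero_or_pos with rfl | hk
    · exact h1
    · exact hin k hk (by omega)

theorem tauPmEq_succ_and_pos_iff {Ω : Type*} (U : ℕ → Ω → ℤ) (M : ℕ) (i j : ℤ) (n : ℕ) (ω : Ω) :
    (tauPmEq U M i (n + 1) ω ∧ pos U i n ω = j) ↔ ExitsAfter M j n (fun k => pos U i k ω) := by
  simp only [tauPmEq, ExitsAfter, Nat.lt_succ_iff, le_add_iff_nonneg_left, zero_le, true_and,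
    and_assoc]

def exitWeight (ν : ℤ → ℝ≥0∞) (M : ℕ) (i j : ℤ) (n : ℕ) : ℝ≥0∞ :=
  ∑' u : Fin (n + 1) → ℤ, if ExitsAfter M j n (tupleWalk i u) then ∏ ℓ, ν (u ℓ) else 0

theorem tsum_ite_inEo (M : ℕ) (f : ℤ → ℝ≥0∞) :
    ∑' k, (if inEo M k then f k else 0) = ∑ k ∈ Finset.Icc 0 ((M : ℤ) - 1), f k := by
  have hmem : ∀ k, k ∈ Finset.Icc 0 ((M : ℤ) - 1) ↔ inEo M k := fun k => Finset.mem_Icc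
  rw [tsum_eq_sum fun k hk => if_neg (mt (hmem k).2 hk)]
  exact Finset.sum_congr rfl fun k hk => if_pos ((hmem k).1 hk)

theorem exitWeight_succ (ν : ℤ → ℝ≥0∞) (M : ℕ) (i j : ℤ) (n : ℕ) :
    exitWeight ν M i j (n + 1)
      = ∑ k ∈ Finset.Icc 0 ((M : ℤ) - 1), ν (k - i) * exitWeight ν M k j n := by
  have hcons : ∀ (a : ℤ) (v : Fin (n + 1) → ℤ),
      (if ExitsAfter M j (n + 1) (tupleWalk i (Fin.cons a v : Fin (n + 2) → ℤ))
        then ∏ ℓ, ν ((Fin.cons a v : Fin (n + 2) → ℤ) ℓ) else 0)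
      = (if inEo M (i + a) then ν a else 0) *
          if ExitsAfter M j n (tupleWalk (i + a) v) then ∏ ℓ, ν (v ℓ) else 0 := by
    intro a v
    have hshift : (fun k => tupleWalk i (Fin.cons a v : Fin (n + 2) → ℤ) (k + 1))
        = tupleWalk (i + a) v := funext (tupleWalk_cons i a v)
    rw [exitsAfter_succ, hshift, tupleWalk_cons, tupleWalk_zero, Fin.prod_univ_succ]
    simp only [Fin.cons_zero, Fin.cons_succ]
    by_cases ha : inEo M (i + a) <;> by_cases hv : ExitsAfter M j n (tupleWalk (i + a) v) <;>
      simp [ha, hv]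
  rw [exitWeight, ← (Fin.consEquiv fun _ => ℤ).tsum_eq, ENNReal.tsum_prod']
  refine (tsum_congr fun a => tsum_congr fun v => hcons a v).trans ?_
  rw [← tsum_ite_inEo]
  conv_rhs => rw [← (Equiv.addLeft i).tsum_eq]
  refine tsum_congr fun a => ?_
  rw [ENNReal.tsum_mul_left, Equiv.coe_addLeft, add_sub_cancel_left, ite_mul, zero_mul]
  rfl

section Probability

variable {Ω : Type*} [MeasurableSpace Ω] {μ : Measure Ω} {U : ℕ → Ω → ℤ} {M : ℕ} {i j : ℤ}

/-- `P_i(τ^± = n + 1, X_n = j)`. -/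
def exitProb (μ : Measure Ω) (U : ℕ → Ω → ℤ) (M : ℕ) (i j : ℤ) (n : ℕ) : ℝ≥0∞ :=
  μ {ω | tauPmEq U M i (n + 1) ω ∧ pos U i n ω = j}

theorem exitProb_eq_exitWeight (hmeas : ∀ ℓ, Measurable (U ℓ)) (hindep : iIndepFun U μ)
    {ν : ℤ → ℝ≥0∞} (hν : ∀ ℓ a, μ {ω | U ℓ ω = a} = ν a) (n : ℕ) :
    exitProb μ U M i j n = exitWeight ν M i j n := by
  have hevent : {ω | tauPmEq U M i (n + 1) ω ∧ pos U i n ω = j}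
      = {ω | (fun ℓ : Fin (n + 1) => U (ℓ + 1) ω) ∈ {u | ExitsAfter M j n (tupleWalk i u)}} := by
    ext ω
    simp only [Set.mem_ofPred_eq, tauPmEq_succ_and_pos_iff]
    exact exitsAfter_congr fun k hk => pos_eq_tupleWalk U i ω hk
  rw [exitProb, hevent, measure_steps_mem_eq_tsum hmeas hindep, exitWeight]
  simp only [hν, Set.indicator_apply, Set.mem_ofPred_eq]

theorem exitProb_zero_toReal :
    (exitProb μ U M i j 0).toReal = (if i = j then 1 else 0) * varpi μ U M i := by
  have hevent : {ω | tauPmEq U M i 1 ω ∧ pos U i 0 ω = j}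
      = {ω | ¬ inEo M (pos U i 1 ω) ∧ i = j} := by
    ext ω
    simp only [Set.mem_ofPred_eq, tauPmEq_succ_and_pos_iff, exitsAfter_zero]
    simp [pos]
  rw [exitProb, hevent, varpi]
  split_ifs with hij <;> simp [hij]

theorem exitProb_succ (hmeas : ∀ ℓ, Measurable (U ℓ)) (hindep : iIndepFun U μ)
    {ν : ℤ → ℝ≥0∞} (hν : ∀ ℓ a, μ {ω | U ℓ ω = a} = ν a) (n : ℕ) :
    exitProb μ U M i j (n + 1)
      = ∑ k ∈ Finset.Icc 0 ((M : ℤ) - 1), ν (k - i) * exitProb μ U M k j n := by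
  simp only [exitProb_eq_exitWeight hmeas hindep hν, exitWeight_succ]

theorem exitProb_succ_toReal {π : ℤ → ℝ} (hmeas : ∀ ℓ, Measurable (U ℓ)) (hindep : iIndepFun U μ)
    (hdist : ∀ ℓ k, (μ {ω | U ℓ ω = k}).toReal = π k) (n : ℕ) :
    (exitProb μ U M i j (n + 1)).toReal
      = ∑ k ∈ Finset.Icc 0 ((M : ℤ) - 1), π (k - i) * (exitProb μ U M k j n).toReal := by
  have := hindep.isProbabilityMeasure
  have hν : ∀ ℓ a, μ {ω | U ℓ ω = a} = μ {ω | U 1 ω = a} := fun ℓ a =>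
    (ENNReal.toReal_eq_toReal_iff' (measure_ne_top _ _) (measure_ne_top _ _)).1
      ((hdist ℓ a).trans (hdist 1 a).symm)
  rw [exitProb_succ hmeas hindep hν, ENNReal.toReal_sum]
  · simp only [ENNReal.toReal_mul, hdist]
  · exact fun k _ => ENNReal.mul_ne_top (measure_ne_top _ _) (measure_ne_top _ _)

end Probability

theorem summable_toReal_mul_pow {f : ℕ → ℝ≥0∞} (hf : ∀ n, f n ≤ 1) {x : ℝ} (hx0 : 0 ≤ x)
    (hx1 : x < 1) : Summable fun n => (f n).toReal * x ^ n := by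
  refine (summable_geometric_of_lt_one hx0 hx1).of_nonneg_of_le (fun n => by positivity)
    fun n => mul_le_of_le_one_left (by positivity) ?_
  exact ENNReal.toReal_le_of_le_ofReal zero_le_one (by simpa using hf n)

theorem Hpm_eq_tsum_exitProb {Ω : Type*} [MeasurableSpace Ω] (μ : Measure Ω)
    [IsProbabilityMeasure μ] (U : ℕ → Ω → ℤ) (M : ℕ) (i j : ℤ) {x : ℝ} (hx0 : 0 ≤ x)
    (hx1 : x < 1) : Hpm μ U M i j x = ∑' n, (exitProb μ U M i j n).toReal * x ^ n := by
  unfold Hpm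
  rw [tsum_eq_zero_add']
  · simp [tauPmEq, exitProb]
  · exact summable_toReal_mul_pow (f := exitProb μ U M i j) (fun _ => prob_le_one) hx0 hx1

theorem tsum_mul_pow_eq_add_mul_sum {ι : Type*} (s : Finset ι) (c : ι → ℝ) (a : ι → ℕ → ℝ)
    (x : ℝ) (i : ι) (ha : ∀ k, Summable fun n => a k n * x ^ n)
    (hrec : ∀ n, a i (n + 1) = ∑ k ∈ s, c k * a k n) :
    ∑' n, a i n * x ^ n = a i 0 + x * ∑ k ∈ s, c k * ∑' n, a k n * x ^ n := by
  rw [(ha i).tsum_eq_zero_add, pow_zero, mul_one]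
  congr 1
  calc ∑' n, a i (n + 1) * x ^ (n + 1)
      = ∑' n, ∑ k ∈ s, x * (c k * (a k n * x ^ n)) := by
        refine tsum_congr fun n => ?_
        rw [hrec, Finset.sum_mul]
        exact Finset.sum_congr rfl fun k _ => by ring
    _ = x * ∑ k ∈ s, c k * ∑' n, a k n * x ^ n := by
        rw [Summable.tsum_finsetSum fun k _ => ((ha k).mul_left _).mul_left _, Finset.mul_sum]
        simp only [tsum_mul_left]

end LRWalk

theorem LRWalk.Hpm_linear_system_general
    (Ω : Type*) [MeasurableSpace Ω] (μ : MeasureTheory.Measure Ω)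
    (M : ℕ)
    (π : ℤ → ℝ)
    (U : ℕ → Ω → ℤ) (hmeas : ∀ ℓ, Measurable (U ℓ))
    (hindep : ProbabilityTheory.iIndepFun U μ)
    (hdist : ∀ ℓ k, (μ {ω | U ℓ ω = k}).toReal = π k)
    (x : ℝ) (hx : x ∈ Set.Ioo (0 : ℝ) 1)
    (i j : ℤ) (hi0 : 0 ≤ i) (hiM : i ≤ (M : ℤ) - 1) :
    (∑ k ∈ Finset.Icc (0 : ℤ) ((M : ℤ) - 1),
        ((if i = k then 1 else 0) - π (k - i) * x) * Hpm μ U M k j x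
      = (if i = j then 1 else 0) * varpi μ U M i) ∧
    (Hpm μ U M i j x
      = (if i = j then 1 else 0) * varpi μ U M i
        + x * ∑ k ∈ Finset.Icc (0 : ℤ) ((M : ℤ) - 1), π (k - i) * Hpm μ U M k j x) := by
  have := hindep.isProbabilityMeasure
  obtain ⟨hx0, hx1⟩ := hx
  have hH : ∀ k, Hpm μ U M k j x = ∑' n, (exitProb μ U M k j n).toReal * x ^ n :=
    fun k => Hpm_eq_tsum_exitProb μ U M k j hx0.le hx1
  have hfirst_step : Hpm μ U M i j x = (if i = j then 1 else 0) * varpi μ U M i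
      + x * ∑ k ∈ Finset.Icc (0 : ℤ) ((M : ℤ) - 1), π (k - i) * Hpm μ U M k j x := by
    simp only [hH]
    rw [tsum_mul_pow_eq_add_mul_sum _ (fun k => π (k - i))
      (fun k n => (exitProb μ U M k j n).toReal) x i
      (fun k => summable_toReal_mul_pow (fun _ => prob_le_one) hx0.le hx1)
      (exitProb_succ_toReal hmeas hindep hdist), exitProb_zero_toReal]
  refine ⟨?_, hfirst_step⟩
  have hi : i ∈ Finset.Icc (0 : ℤ) ((M : ℤ) - 1) := Finset.mem_Icc.2 ⟨hi0, hiM⟩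
  have hpull : ∑ k ∈ Finset.Icc (0 : ℤ) ((M : ℤ) - 1), π (k - i) * x * Hpm μ U M k j x
      = x * ∑ k ∈ Finset.Icc (0 : ℤ) ((M : ℤ) - 1), π (k - i) * Hpm μ U M k j x := by
    rw [Finset.mul_sum]
    exact Finset.sum_congr rfl fun k _ => by ring
  simp only [sub_mul, ite_mul, one_mul, zero_mul, Finset.sum_sub_distrib, Finset.sum_ite_eq,
    if_pos hi, hpull]
  rw [hfirst_step, add_sub_cancel_right, ite_mul, one_mul, zero_mul]

/-- **Linear system for the exit-time generating functions `H^±`** of the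
`(L,R)`-random walk: for every `x ∈ (0,1)` and all `i, j ∈ {0,…,M−1}`,
`Σ_{k=0}^{M−1} (δ_{ik} − π_{k−i}·x)·H^±_{kj}(x) = δ_{ij}·ϖ_i`; equivalently
`H^±_{ij}(x) = δ_{ij}·ϖ_i + x·Σ_{k=0}^{M−1} π_{k−i}·H^±_{kj}(x)`. -/
theorem LRWalk.Hpm_linear_system
    (Ω : Type*) [MeasurableSpace Ω] (μ : MeasureTheory.Measure Ω)
    [MeasureTheory.IsProbabilityMeasure μ]
    (L R : ℕ) (hL : 1 ≤ L) (hR : 1 ≤ R) (M : ℕ) (hM : M = max L R)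
    (π : ℤ → ℝ) (hnn : ∀ k, 0 ≤ π k)
    (hsupp : ∀ k : ℤ, k < -(L : ℤ) ∨ (R : ℤ) < k → π k = 0)
    (hsum : ∑ k ∈ Finset.Icc (-(L : ℤ)) (R : ℤ), π k = 1)
    (U : ℕ → Ω → ℤ) (hmeas : ∀ ℓ, Measurable (U ℓ))
    (hindep : ProbabilityTheory.iIndepFun U μ)
    (hdist : ∀ ℓ k, (μ {ω | U ℓ ω = k}).toReal = π k)
    (x : ℝ) (hx : x ∈ Set.Ioo (0 : ℝ) 1)
    (i j : ℤ) (hi0 : 0 ≤ i) (hiM : i ≤ (M : ℤ) - 1) (hj0 : 0 ≤ j) (hjM : j ≤ (M : ℤ) - 1) :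
    (∑ k ∈ Finset.Icc (0 : ℤ) ((M : ℤ) - 1),
        ((if i = k then 1 else 0) - π (k - i) * x) * Hpm μ U M k j x
      = (if i = j then 1 else 0) * varpi μ U M i) ∧
    (Hpm μ U M i j x
      = (if i = j then 1 else 0) * varpi μ U M i
        + x * ∑ k ∈ Finset.Icc (0 : ℤ) ((M : ℤ) - 1), π (k - i) * Hpm μ U M k j x) :=
  LRWalk.Hpm_linear_system_general Ω μ M π U hmeas hindep hdist x hx i j hi0 hiM
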